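/- Let G be a finite group, K a field of characteristic ℓ > 0, and ρ : G → GL₂(K) a homomorphism with values in upper triangular matrices, with diagonal characters χ₁ and χ₂. If the image of the induced projective representation Pρ : G → PGL₂(K) has order prime to ℓ, then the kernel of Pρ equals the kernel of the character χ₁·χ₂⁻¹; in particular the image of Pρ is isomorphic to the image of χ₁·χ₂⁻¹. -/
import Mathlib


open Matrix

/-- The canonical projection `GL₂(K) → PGL₂(K) = GL₂(K)/center`. -/
def projGL2 (K : Type*) [Field K] :
    Matrix.GeneralLinearGroup (Fin 2) K →*
      Matrix.GeneralLinearGroup (Fin 2) K ⧸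
        Subgroup.center (Matrix.GeneralLinearGroup (Fin 2) K) :=
  QuotientGroup.mk' (Subgroup.center (Matrix.GeneralLinearGroup (Fin 2) K))

/-- A scalar element of `GL₂` is central. -/
lemma scalar_mem_center {K : Type*} [Field K]
    (M : Matrix.GeneralLinearGroup (Fin 2) K) (a : K)
    (hM : (M : Matrix (Fin 2) (Fin 2) K) = a • (1 : Matrix (Fin 2) (Fin 2) K)) :
    M ∈ Subgroup.center (Matrix.GeneralLinearGroup (Fin 2) K) := by
  rw [Subgroup.mem_center_iff]
  intro h
  ext : 1
  show (h : Matrix (Fin 2) (Fin 2) K) * M = (M : Matrix (Fin 2) (Fin 2) K) * h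
  rw [hM, Matrix.mul_smul, Matrix.smul_mul, Matrix.mul_one, Matrix.one_mul]

/-- Let `G` be a finite group, `K` a field of characteristic `ℓ > 0`, and
`ρ : G → GL₂(K)` a homomorphism with values in upper triangular matrices with diagonal
characters `χ₁, χ₂`. If the image of the induced projective representation
`Pρ : G → PGL₂(K)` has order prime to `ℓ`, then `ker Pρ = ker (χ₁·χ₂⁻¹)`; in particular
the image of `Pρ` is isomorphic to the image of `χ₁·χ₂⁻¹`. -/
theorem stmt9 {G : Type*} [Group G] [Finite G] {K : Type*} [Field K]
    (ℓ : ℕ) (hℓ : ℓ.Prime) [CharP K ℓ]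
    (χ₁ χ₂ : G →* Kˣ) (c : G → K)
    (ρ : G →* Matrix.GeneralLinearGroup (Fin 2) K)
    (hρ : ∀ g : G, (ρ g : Matrix (Fin 2) (Fin 2) K) = !![(χ₁ g : K), c g; 0, (χ₂ g : K)])
    (hord : (Nat.card ((projGL2 K).comp ρ).range).Coprime ℓ) :
    ((projGL2 K).comp ρ).ker = (χ₁ * χ₂⁻¹).ker ∧
    Nonempty ((((projGL2 K).comp ρ).range) ≃* ((χ₁ * χ₂⁻¹).range)) := by
  have hFact : Fact ℓ.Prime := ⟨hℓ⟩
  have hmemker : ∀ g : G, g ∈ ((projGL2 K).comp ρ).ker ↔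
      ρ g ∈ Subgroup.center (Matrix.GeneralLinearGroup (Fin 2) K) := by
    intro g
    rw [MonoidHom.mem_ker, MonoidHom.comp_apply]
    exact QuotientGroup.eq_one_iff _
  have hker : ((projGL2 K).comp ρ).ker = (χ₁ * χ₂⁻¹).ker := by
    ext g
    rw [hmemker]
    constructor
    · intro hg
      rw [Subgroup.mem_center_iff] at hg
      -- commute with the unit of !![1,0;1,1]
      set V : Matrix (Fin 2) (Fin 2) K := !![1,0;1,1] with hV
      have hVdet : IsUnit V.det := by simp [hV, Matrix.det_fin_two_of]
      have hg' := hg (Matrix.GeneralLinearGroup.mk'' V hVdet)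
      have hg'' : V * (ρ g : Matrix (Fin 2) (Fin 2) K)
          = (ρ g : Matrix (Fin 2) (Fin 2) K) * V := by
        have := congrArg Units.val hg'
        simpa [Matrix.GeneralLinearGroup.mk'', Matrix.nonsingInvUnit] using this
      rw [hρ g, hV] at hg''
      have h00 := congrFun (congrFun hg'' 1) 0
      simp [Matrix.mul_apply, Fin.sum_univ_two] at h00
      have heq : (χ₁ g : K) = (χ₂ g : K) := h00
      rw [MonoidHom.mem_ker]
      have : χ₁ g = χ₂ g := Units.ext heq
      simp [this]
    · intro hg
      rw [MonoidHom.mem_ker] at hg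
      have heq : χ₁ g = χ₂ g := by
        have := hg
        rw [MonoidHom.mul_apply, MonoidHom.inv_apply, mul_inv_eq_one] at this
        exact this
      by_cases hc : c g = 0
      · apply scalar_mem_center (ρ g) (χ₁ g : K)
        rw [hρ g, hc, heq]
        ext i j
        fin_cases i <;> fin_cases j <;> simp [Matrix.smul_apply, Matrix.one_apply]
      · exfalso
        -- the image of ρ g in PGL₂ has order ℓ
        set x := ((projGL2 K).comp ρ) g with hx
        have hxpow : x ^ ℓ = 1 := by
          rw [hx, MonoidHom.comp_apply, ← map_pow]
          rw [show projGL2 K (ρ g ^ ℓ) = 1 ↔ _ from QuotientGroup.eq_one_iff _]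
          apply scalar_mem_center _ ((χ₁ g : K) ^ ℓ)
          have : ((ρ g ^ ℓ : Matrix.GeneralLinearGroup (Fin 2) K) :
              Matrix (Fin 2) (Fin 2) K) = (ρ g : Matrix (Fin 2) (Fin 2) K) ^ ℓ := by
            simp [Units.val_pow_eq_pow_val]
          rw [this, hρ g, heq]
          have hsplit : (!![(χ₂ g : K), c g; 0, (χ₂ g : K)])
              = (χ₂ g : K) • (1 : Matrix (Fin 2) (Fin 2) K) + c g • !![0,1;0,0] := by
            ext i j
            fin_cases i <;> fin_cases j <;>
              simp [Matrix.smul_apply, Matrix.one_apply]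
          rw [hsplit]
          have hcomm : Commute ((χ₂ g : K) • (1 : Matrix (Fin 2) (Fin 2) K))
              (c g • !![0,1;0,0]) := by
            unfold Commute SemiconjBy
            rw [Matrix.smul_mul, Matrix.mul_smul, Matrix.one_mul,
              Matrix.smul_mul, Matrix.mul_smul, Matrix.mul_one]
            exact smul_comm _ _ _
          rw [add_pow_char_of_commute _ hcomm]
          have hE2 : (!![(0:K),1;0,0]) ^ 2 = 0 := by
            rw [sq]
            ext i j
            fin_cases i <;> fin_cases j <;> simp [Matrix.mul_apply, Fin.sum_univ_two]
          have hEl : (!![(0:K),1;0,0]) ^ ℓ = 0 := by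
            have h2 : 2 ≤ ℓ := hℓ.two_le
            calc (!![(0:K),1;0,0]) ^ ℓ
                = (!![(0:K),1;0,0]) ^ 2 * (!![(0:K),1;0,0]) ^ (ℓ - 2) := by
                  rw [← pow_add, Nat.add_sub_cancel' h2]
              _ = 0 := by rw [hE2, Matrix.zero_mul]
          rw [smul_pow, smul_pow, hEl, smul_zero, add_zero, one_pow]
        have hxne : x ≠ 1 := by
          intro hx1
          have hmem : ρ g ∈ Subgroup.center (Matrix.GeneralLinearGroup (Fin 2) K) := by
            rw [← hmemker g]
            exact hx1
          rw [Subgroup.mem_center_iff] at hmem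
          set V : Matrix (Fin 2) (Fin 2) K := !![1,0;1,1] with hV
          have hVdet : IsUnit V.det := by simp [hV, Matrix.det_fin_two_of]
          have hg' := hmem (Matrix.GeneralLinearGroup.mk'' V hVdet)
          have hg'' : V * (ρ g : Matrix (Fin 2) (Fin 2) K)
              = (ρ g : Matrix (Fin 2) (Fin 2) K) * V := by
            have := congrArg Units.val hg'
            simpa [Matrix.GeneralLinearGroup.mk'', Matrix.nonsingInvUnit] using this
          rw [hρ g, hV] at hg''
          have h01 := congrFun (congrFun hg'' 0) 0
          simp [Matrix.mul_apply, Fin.sum_univ_two] at h01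
          exact hc h01
        have hordx : orderOf x = ℓ := by
          have hdvd : orderOf x ∣ ℓ := orderOf_dvd_of_pow_eq_one hxpow
          rcases (Nat.Prime.eq_one_or_self_of_dvd hℓ _ hdvd) with h1 | h1
          · exact absurd (orderOf_eq_one_iff.mp h1) hxne
          · exact h1
        have hxrange : x ∈ ((projGL2 K).comp ρ).range := ⟨g, rfl⟩
        have hdvd : orderOf x ∣ Nat.card (((projGL2 K).comp ρ).range) :=
          Subgroup.orderOf_dvd_natCard _ hxrange
        rw [hordx] at hdvd
        exact (Nat.Prime.coprime_iff_not_dvd hℓ).mp hord.symm hdvd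
  refine ⟨hker, ?_⟩
  have e1 := QuotientGroup.quotientKerEquivRange ((projGL2 K).comp ρ)
  have e2 := QuotientGroup.quotientKerEquivRange (χ₁ * χ₂⁻¹)
  exact ⟨e1.symm.trans ((QuotientGroup.quotientMulEquivOfEq hker).trans e2)⟩
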